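/- If φ is a bounded holomorphic function on D^n satisfying sup_{z∈D^n}(∏_{j=1}^n(1-|z_j|²))·(Σ_{j=1}^n log(2/(1-|z_j|²)))·|∂^n φ/∂z_1⋯∂z_n(z)| < ∞, then φ is a multiplier from the sum Bloch space 𝔹(D^n) to the product Bloch space B(D^n): ‖φf‖_{B(D^n)} ≤ C(‖φ‖_∞ + ‖φ‖_{𝔹_L})‖f‖_𝔹 for all f ∈ 𝔹(D^n). -/

import Mathlib

/-- The open unit polydisc in `ℂⁿ`. -/
def polydisc (n : ℕ) : Set (Fin n → ℂ) := {z | ∀ j, ‖z j‖ < 1}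

/-- Partial (complex) derivative in the `j`-th variable. -/
noncomputable def pderivAt (n : ℕ) (j : Fin n) (f : (Fin n → ℂ) → ℂ) :
    (Fin n → ℂ) → ℂ :=
  fun z => deriv (fun w : ℂ => f (Function.update z j w)) (z j)

/-- Iterated mixed partial derivative, once in each variable of the list. -/
noncomputable def mderiv (n : ℕ) : List (Fin n) → ((Fin n → ℂ) → ℂ) → ((Fin n → ℂ) → ℂ)
  | [], f => f
  | j :: l, f => pderivAt n j (mderiv n l f)

/-- The product-Bloch quantity `|f(0)| + ∏ⱼ(1-|zⱼ|²)·|∂ⁿf/∂z₁⋯∂zₙ(z)|`. -/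
noncomputable def prodBlochExpr (n : ℕ) (f : (Fin n → ℂ) → ℂ) (z : Fin n → ℂ) : ℝ :=
  ‖f 0‖ +
    (∏ j, (1 - ‖z j‖ ^ 2)) * ‖mderiv n (List.finRange n) f z‖

/-- The sum-Bloch quantity `|f(0)| + Σⱼ(1-|zⱼ|²)·|∂f/∂zⱼ(z)|`. -/
noncomputable def sumBlochExpr (n : ℕ) (f : (Fin n → ℂ) → ℂ) (z : Fin n → ℂ) : ℝ :=
  ‖f 0‖ +
    ∑ j, (1 - ‖z j‖ ^ 2) * ‖pderivAt n j f z‖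

/-!
By the Leibniz rule, `∂₁⋯∂ₙ(φ f)` is a sum of `2ⁿ` terms `∂_S φ · ∂_T f` over the partitions
`S ⊔ T` of the variables. If `T` contains some `j`, the sum-Bloch norm bounds `∂ⱼ f` by
`‖f‖_𝔹 / (1 - |zⱼ|²)`, and a Cauchy estimate on the disc of radius `(1 - |z_k|) / 2` bounds each
further derivative in `z_k` at the cost of a factor `4 / (1 - |z_k|²)`; so such a term is
`O(‖φ‖_∞ ‖f‖_𝔹 ∏ₖ (1 - |z_k|²)⁻¹)`. The remaining term `∂ⁿφ · f` is where the logarithm enters: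
integrating the sum-Bloch bound along one coordinate at a time gives
`|f(z)| ≤ |f(0)| + ‖f‖_𝔹 Σₖ log (2 / (1 - |z_k|²))`, and this growth is absorbed by the `𝔹_L`
condition on `φ`.
-/

open Metric Set Function Filter Topology

theorem norm_deriv_le_of_forall_mem_ball_norm_le {g : ℂ → ℂ} {c : ℂ} {R M : ℝ} (hR : 0 < R)
    (hd : DifferentiableOn ℂ g (ball c R)) (hM : ∀ w ∈ ball c R, ‖g w‖ ≤ M) :
    ‖deriv g c‖ ≤ M / R := by
  rw [le_div_iff₀ hR]
  have hlim : Tendsto (fun r => ‖deriv g c‖ * r) (𝓝[<] R) (𝓝 (‖deriv g c‖ * R)) :=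
    (tendsto_const_nhds.mul tendsto_id).mono_left nhdsWithin_le_nhds
  refine le_of_tendsto hlim ?_
  filter_upwards [Ioo_mem_nhdsLT hR] with r ⟨hr0, hrR⟩
  rw [← le_div_iff₀ hr0]
  exact Complex.norm_deriv_le_of_forall_mem_sphere_norm_le hr0
    (hd.diffContOnCl_ball (closedBall_subset_ball hrR))
    fun w hw => hM w (sphere_subset_ball hrR hw)

theorem norm_sub_sub_deriv_mul_le {g : ℂ → ℂ} {c h : ℂ} {R M : ℝ} (hR : 0 < R)
    (hd : DifferentiableOn ℂ g (ball c R)) (hM : ∀ w ∈ ball c R, ‖g w‖ ≤ M)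
    (hh : ‖h‖ < R / 4) :
    ‖g (c + h) - g c - deriv g c * h‖ ≤ 8 * M / R ^ 2 * ‖h‖ ^ 2 := by
  have hd' : DifferentiableOn ℂ (deriv g) (ball c R) := hd.deriv isOpen_ball
  have hg' : ∀ w ∈ ball c (R / 2), ‖deriv g w‖ ≤ 2 * M / R := by
    intro w hw
    have hsub : ball w (R / 2) ⊆ ball c R := ball_subset_ball' (by rw [mem_ball] at hw; linarith)
    convert norm_deriv_le_of_forall_mem_ball_norm_le (by linarith) (hd.mono hsub)
      fun v hv => hM v (hsub hv) using 1
    field_simp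
  have hg'' : ∀ w ∈ ball c (R / 4), ‖deriv (deriv g) w‖ ≤ 8 * M / R ^ 2 := by
    intro w hw
    have hsub : ball w (R / 4) ⊆ ball c (R / 2) :=
      ball_subset_ball' (by rw [mem_ball] at hw; linarith)
    convert norm_deriv_le_of_forall_mem_ball_norm_le (by linarith)
      (hd'.mono (hsub.trans (ball_subset_ball (by linarith)))) fun v hv => hg' v (hsub hv) using 1
    field_simp; ring
  have hsub : closedBall c ‖h‖ ⊆ ball c (R / 4) := closedBall_subset_ball hh
  have hlip : ∀ w ∈ closedBall c ‖h‖, ‖deriv g w - deriv g c‖ ≤ 8 * M / R ^ 2 * ‖h‖ := by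
    intro w hw
    have := (convex_ball c (R / 4)).norm_image_sub_le_of_norm_deriv_le
      (fun v hv => hd'.differentiableAt (isOpen_ball.mem_nhds (ball_subset_ball (by linarith) hv)))
      hg'' (mem_ball_self (by linarith)) (hsub hw)
    rw [← dist_eq_norm w c] at this
    have hM0 : 0 ≤ 8 * M / R ^ 2 := (norm_nonneg _).trans (hg'' c (mem_ball_self (by linarith)))
    exact this.trans (by gcongr; exact mem_closedBall.mp hw)
  have hG : ∀ w ∈ closedBall c ‖h‖, HasDerivWithinAt (fun ζ => g ζ - deriv g c * ζ)
      (deriv g w - deriv g c) (closedBall c ‖h‖) w := by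
    intro w hw
    have hgw := (hd.differentiableAt (isOpen_ball.mem_nhds
      (ball_subset_ball (by linarith) (hsub hw)))).hasDerivAt
    have := hgw.sub ((hasDerivAt_id' w).const_mul (deriv g c))
    rw [mul_one] at this
    exact this.hasDerivWithinAt
  have := (convex_closedBall c ‖h‖).norm_image_sub_le_of_norm_hasDerivWithin_le hG hlip
    (mem_closedBall_self (norm_nonneg h)) (y := c + h) (by simp)
  calc ‖g (c + h) - g c - deriv g c * h‖
      = ‖g (c + h) - deriv g c * (c + h) - (g c - deriv g c * c)‖ := by ring_nf
    _ ≤ 8 * M / R ^ 2 * ‖h‖ * ‖c + h - c‖ := this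
    _ = 8 * M / R ^ 2 * ‖h‖ ^ 2 := by simp; ring

theorem differentiableOn_deriv_of_separately {F : ℂ → ℂ → ℂ} {U : Set ℂ} (hU : IsOpen U)
    {c : ℂ} {R M : ℝ} (hR : 0 < R)
    (hF₁ : ∀ u ∈ U, DifferentiableOn ℂ (F u) (ball c R))
    (hF₂ : ∀ v ∈ ball c R, DifferentiableOn ℂ (fun u => F u v) U)
    (hM : ∀ u ∈ U, ∀ v ∈ ball c R, ‖F u v‖ ≤ M) :
    DifferentiableOn ℂ (fun u => deriv (F u) c) U := by
  set K := 8 * M / R ^ 2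
  -- Weierstrass: by the Taylor estimate the difference quotients in `v` converge uniformly in `u`
  have hquot : TendstoUniformlyOn (fun h u => (F u (c + h) - F u c) / h)
      (fun u => deriv (F u) c) (𝓝[≠] 0) U := by
    rw [Metric.tendstoUniformlyOn_iff]
    intro ε hε
    have hδ : 0 < min (R / 4) (ε / (|K| + 1)) := lt_min (by linarith) (by positivity)
    filter_upwards [self_mem_nhdsWithin, nhdsWithin_le_nhds (ball_mem_nhds 0 hδ)]
      with h (hh0 : h ≠ 0) hh u hu
    rw [mem_ball_zero_iff, lt_min_iff] at hh
    have key := norm_sub_sub_deriv_mul_le hR (hF₁ u hu) (hM u hu) hh.1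
    rw [dist_eq_norm, ← norm_neg, neg_sub, div_sub' hh0, norm_div]
    have hpos : 0 < ‖h‖ := norm_pos_iff.mpr hh0
    rw [mul_comm h, div_lt_iff₀ hpos]
    calc _ ≤ K * ‖h‖ ^ 2 := key
      _ ≤ |K| * ‖h‖ ^ 2 := by gcongr; exact le_abs_self K
      _ < (|K| + 1) * ‖h‖ * ‖h‖ := by nlinarith
      _ ≤ ε * ‖h‖ := by gcongr; exact (lt_div_iff₀' (by positivity)).mp hh.2 |>.le
  refine hquot.tendstoLocallyUniformlyOn.differentiableOn ?_ hU
  filter_upwards [nhdsWithin_le_nhds (ball_mem_nhds 0 hR)] with h hh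
  have hch : c + h ∈ ball c R := by simpa using hh
  exact ((hF₂ _ hch).sub (hF₂ c (mem_ball_self hR))).div_const h

theorem norm_sub_le_neg_mul_log_of_norm_deriv_le {g : ℂ → ℂ} {B : ℝ}
    (hd : DifferentiableOn ℂ g (ball 0 1))
    (hB : ∀ v ∈ ball (0 : ℂ) 1, (1 - ‖v‖) * ‖deriv g v‖ ≤ B) {u : ℂ} (hu : ‖u‖ < 1) :
    ‖g u - g 0‖ ≤ -B * Real.log (1 - ‖u‖) := by
  set a := ‖u‖
  have ha0 : 0 ≤ a := norm_nonneg u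
  have hmem : ∀ t ∈ Icc (0 : ℝ) 1, (t : ℂ) * u ∈ ball (0 : ℂ) 1 := by
    intro t ht
    rw [mem_ball_zero_iff, norm_mul, Complex.norm_real, Real.norm_of_nonneg ht.1]
    nlinarith [ht.2]
  have hta : ∀ t ∈ Icc (0 : ℝ) 1, 0 < 1 - t * a := fun t ht => by nlinarith [ht.1, ht.2]
  -- compare `t ↦ g (t u) - g 0` with `-B log (1 - t a)`, whose derivative `B a / (1 - t a)`
  -- dominates `‖deriv g (t u) * u‖`
  have hγ : ContinuousOn (fun t : ℝ => g (t * u) - g 0) (Icc 0 1) :=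
    (hd.continuousOn.comp (by fun_prop) hmem).sub continuousOn_const
  have hγ' : ∀ t ∈ Ico (0 : ℝ) 1, HasDerivWithinAt (fun t : ℝ => g (t * u) - g 0)
      (deriv g (t * u) * u) (Ici t) t := by
    intro t ht
    have hg := (hd.differentiableAt
      (isOpen_ball.mem_nhds (hmem t (Ico_subset_Icc_self ht)))).hasDerivAt
    exact ((hg.comp (t : ℂ) (hasDerivAt_mul_const u)).comp_ofReal.sub_const (g 0)).hasDerivWithinAt
  have hE : ContinuousOn (fun t : ℝ => -B * Real.log (1 - t * a)) (Icc 0 1) :=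
    ((continuousOn_const.sub (by fun_prop)).log fun t ht => (hta t ht).ne').const_smul (-B)
  have hE' : ∀ t ∈ Ico (0 : ℝ) 1, HasDerivWithinAt (fun t : ℝ => -B * Real.log (1 - t * a))
      (B * a / (1 - t * a)) (Ici t) t := by
    intro t ht
    have := (((hasDerivAt_id t).mul_const a).const_sub 1).log
      (hta t (Ico_subset_Icc_self ht)).ne' |>.const_mul (-B)
    refine (this.congr_deriv ?_).hasDerivWithinAt
    simp only [id, one_mul]
    field_simp
  have hbound : ∀ t ∈ Ico (0 : ℝ) 1, ‖deriv g (t * u) * u‖ ≤ B * a / (1 - t * a) := by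
    intro t ht
    have h := hB _ (hmem t (Ico_subset_Icc_self ht))
    rw [norm_mul, Complex.norm_real, Real.norm_of_nonneg ht.1] at h
    rw [norm_mul, le_div_iff₀ (hta t (Ico_subset_Icc_self ht))]
    nlinarith [norm_nonneg u]
  simpa using image_norm_le_of_norm_deriv_right_le_deriv_boundary' hγ hγ' (by simp) hE hE'
    hbound (right_mem_Icc.mpr zero_le_one)

theorem neg_log_one_sub_le_log_two_div {a : ℝ} (ha0 : 0 ≤ a) (ha : a < 1) :
    -Real.log (1 - a) ≤ Real.log (2 / (1 - a ^ 2)) := by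
  have ha1 : 0 < 1 - a := sub_pos.mpr ha
  rw [← Real.log_inv]
  apply Real.log_le_log (inv_pos.mpr ha1)
  rw [inv_eq_one_div, div_le_div_iff₀ ha1 (by nlinarith)]
  nlinarith

theorem norm_sub_le_mul_log_of_bloch {g : ℂ → ℂ} {B : ℝ}
    (hd : DifferentiableOn ℂ g (ball 0 1))
    (hB : ∀ v ∈ ball (0 : ℂ) 1, (1 - ‖v‖ ^ 2) * ‖deriv g v‖ ≤ B) {u : ℂ} (hu : ‖u‖ < 1) :
    ‖g u - g 0‖ ≤ B * Real.log (2 / (1 - ‖u‖ ^ 2)) := by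
  have hB0 : 0 ≤ B := by
    have := hB 0 (mem_ball_self one_pos)
    rw [norm_zero, zero_pow two_ne_zero, sub_zero, one_mul] at this
    exact (norm_nonneg _).trans this
  have hB' : ∀ v ∈ ball (0 : ℂ) 1, (1 - ‖v‖) * ‖deriv g v‖ ≤ B := by
    intro v hv
    have hv1 : ‖v‖ < 1 := mem_ball_zero_iff.mp hv
    refine le_trans ?_ (hB v hv)
    gcongr
    nlinarith [norm_nonneg v]
  calc ‖g u - g 0‖ ≤ -B * Real.log (1 - ‖u‖) :=
        norm_sub_le_neg_mul_log_of_norm_deriv_le hd hB' hu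
    _ = B * -Real.log (1 - ‖u‖) := by ring
    _ ≤ B * Real.log (2 / (1 - ‖u‖ ^ 2)) := by
        gcongr
        exact neg_log_one_sub_le_log_two_div (norm_nonneg u) hu

section Polydisc

variable {n : ℕ}

theorem isOpen_polydisc : IsOpen (polydisc n) := by
  have : polydisc n = ball 0 1 := by
    ext z
    simp [polydisc, ball_pi _ one_pos]
  exact this ▸ isOpen_ball

theorem update_mem_ball {ι X : Type*} [Fintype ι] [DecidableEq ι] [PseudoMetricSpace X]
    {z w : ι → X} {r : ℝ} (hw : w ∈ ball z r) (j : ι) {v : X} (hv : dist v (z j) < r) :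
    update w j v ∈ ball z r := by
  rw [mem_ball, dist_pi_lt_iff ((dist_nonneg).trans_lt hw)]
  intro k
  rcases eq_or_ne k j with rfl | hkj
  · simpa using hv
  · simpa [hkj] using (dist_le_pi_dist w z k).trans_lt hw

theorem update_mem_polydisc {z : Fin n → ℂ} (hz : z ∈ polydisc n) (j : Fin n) {v : ℂ}
    (hv : ‖v‖ < 1) : update z j v ∈ polydisc n := by
  intro k
  rcases eq_or_ne k j with rfl | hkj
  · simpa using hv
  · simpa [hkj] using hz k

theorem one_sub_norm_sq_pos {z : Fin n → ℂ} (hz : z ∈ polydisc n) (j : Fin n) :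
    0 < 1 - ‖z j‖ ^ 2 := by
  have := hz j
  nlinarith [norm_nonneg (z j)]

theorem DifferentiableOn.differentiableOn_update {F : (Fin n → ℂ) → ℂ} {U : Set (Fin n → ℂ)}
    (hF : DifferentiableOn ℂ F U) (z : Fin n → ℂ) (j : Fin n) :
    DifferentiableOn ℂ (fun u => F (update z j u)) {u | update z j u ∈ U} :=
  hF.comp (fun u _ => (hasFDerivAt_update z u).differentiableAt.differentiableWithinAt)
    fun _ hu => hu

end Polydisc

/-- Separately holomorphic and locally bounded functions on `U`. By Osgood's lemma these are the
holomorphic functions on `U` when `U` is open, but unlike joint holomorphy this class is seen to be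
stable under partial derivatives by one-variable arguments alone. -/
structure SepHolomorphicOn (n : ℕ) (F : (Fin n → ℂ) → ℂ) (U : Set (Fin n → ℂ)) : Prop where
  differentiableAt_slice : ∀ z ∈ U, ∀ j, DifferentiableAt ℂ (fun u => F (update z j u)) (z j)
  locallyBounded : ∀ z ∈ U, ∃ M, ∀ᶠ w in 𝓝 z, ‖F w‖ ≤ M

namespace SepHolomorphicOn

variable {n : ℕ} {F G : (Fin n → ℂ) → ℂ} {U : Set (Fin n → ℂ)}

theorem differentiableAt_update (hF : SepHolomorphicOn n F U) {z : Fin n → ℂ} {j : Fin n}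
    {u : ℂ} (hu : update z j u ∈ U) : DifferentiableAt ℂ (fun v => F (update z j v)) u := by
  simpa using hF.differentiableAt_slice _ hu j

theorem differentiableOn_update (hF : SepHolomorphicOn n F U) (z : Fin n → ℂ) (j : Fin n) :
    DifferentiableOn ℂ (fun v => F (update z j v)) {u | update z j u ∈ U} :=
  fun _ hu => (hF.differentiableAt_update hu).differentiableWithinAt

theorem _root_.DifferentiableOn.sepHolomorphicOn (hF : DifferentiableOn ℂ F U) (hU : IsOpen U) :
    SepHolomorphicOn n F U where
  differentiableAt_slice z hz j :=
    (hF.differentiableOn_update z j).differentiableAt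
      (hU.preimage (continuous_const.update j continuous_id) |>.mem_nhds (by simpa using hz))
  locallyBounded z hz :=
    ⟨‖F z‖ + 1, ((hF.continuousOn.continuousAt (hU.mem_nhds hz)).norm.eventually
      (gt_mem_nhds (lt_add_one _))).mono fun _ => le_of_lt⟩

theorem mul (hF : SepHolomorphicOn n F U) (hG : SepHolomorphicOn n G U) :
    SepHolomorphicOn n (F * G) U where
  differentiableAt_slice z hz j :=
    (hF.differentiableAt_slice z hz j).mul (hG.differentiableAt_slice z hz j)
  locallyBounded z hz := by
    obtain ⟨M, hM⟩ := hF.locallyBounded z hz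
    obtain ⟨N, hN⟩ := hG.locallyBounded z hz
    refine ⟨M * N, ?_⟩
    filter_upwards [hM, hN] with w hMw hNw
    rw [Pi.mul_apply, norm_mul]
    exact mul_le_mul hMw hNw (norm_nonneg _) ((norm_nonneg _).trans hMw)

theorem exists_ball_bound (hF : SepHolomorphicOn n F U) (hU : IsOpen U) {z : Fin n → ℂ}
    (hz : z ∈ U) : ∃ r > 0, ∃ M, ∀ w ∈ ball z r, w ∈ U ∧ ‖F w‖ ≤ M := by
  obtain ⟨M, hM⟩ := hF.locallyBounded z hz
  obtain ⟨r, hr, h⟩ := Metric.eventually_nhds_iff_ball.mp ((hU.eventually_mem hz).and hM)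
  exact ⟨r, hr, M, h⟩

theorem differentiableAt_update_pderivAt (hF : SepHolomorphicOn n F U) (hU : IsOpen U)
    {z : Fin n → ℂ} (hz : z ∈ U) (i j : Fin n) :
    DifferentiableAt ℂ (fun u => _root_.pderivAt n j F (update z i u)) (z i) := by
  rcases eq_or_ne i j with rfl | hij
  · have heq : (fun u => _root_.pderivAt n i F (update z i u)) =
        deriv (fun u => F (update z i u)) := by
      funext u
      simp [_root_.pderivAt]
    have hopen : IsOpen {u | update z i u ∈ U} :=
      hU.preimage (continuous_const.update i continuous_id)
    rw [heq]
    exact ((hF.differentiableOn_update z i).deriv hopen).differentiableAt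
      (hopen.mem_nhds (by simpa using hz))
  obtain ⟨r, hr, M, hM⟩ := hF.exists_ball_bound hU hz
  have hmem : ∀ u ∈ ball (z i) r, ∀ v ∈ ball (z j) r, update (update z i u) j v ∈ ball z r :=
    fun u hu v hv => update_mem_ball (update_mem_ball (mem_ball_self hr) i hu) j hv
  have hsep := differentiableOn_deriv_of_separately
    (F := fun u v => F (update (update z i u) j v)) (c := z j) isOpen_ball hr
    (fun u hu v hv => (hF.differentiableAt_update (hM _ (hmem u hu v hv)).1).differentiableWithinAt)
    (fun v hv u hu => by
      have := (hM _ (hmem u hu v hv)).1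
      simp only [update_comm hij] at this ⊢
      exact (hF.differentiableAt_update this).differentiableWithinAt)
    fun u hu v hv => (hM _ (hmem u hu v hv)).2
  have heq : (fun u => _root_.pderivAt n j F (update z i u)) =
      fun u => deriv (fun v => F (update (update z i u) j v)) (z j) := by
    funext u
    simp [_root_.pderivAt, update_of_ne hij.symm]
  rw [heq]
  exact hsep.differentiableAt (isOpen_ball.mem_nhds (mem_ball_self hr))

theorem pderivAt (hF : SepHolomorphicOn n F U) (hU : IsOpen U) (j : Fin n) :
    SepHolomorphicOn n (_root_.pderivAt n j F) U where
  differentiableAt_slice z hz i := hF.differentiableAt_update_pderivAt hU hz i j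
  locallyBounded z hz := by
    obtain ⟨r, hr, M, hM⟩ := hF.exists_ball_bound hU hz
    refine ⟨M / (r / 2), Metric.eventually_nhds_iff_ball.mpr ⟨r / 2, half_pos hr, fun w hw => ?_⟩⟩
    have hmem : ∀ v ∈ ball (w j) (r / 2), update w j v ∈ ball z r := by
      intro v hv
      refine update_mem_ball (ball_subset_ball (by linarith) hw) j ?_
      calc dist v (z j) ≤ dist v (w j) + dist (w j) (z j) := dist_triangle _ _ _
        _ < r / 2 + r / 2 := add_lt_add hv ((dist_le_pi_dist w z j).trans_lt hw)
        _ = r := add_halves r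
    exact norm_deriv_le_of_forall_mem_ball_norm_le (half_pos hr)
      (fun v hv => (hF.differentiableAt_update (hM _ (hmem v hv)).1).differentiableWithinAt)
      fun v hv => (hM _ (hmem v hv)).2

theorem mderiv (hF : SepHolomorphicOn n F U) (hU : IsOpen U) :
    ∀ l, SepHolomorphicOn n (_root_.mderiv n l F) U
  | [] => hF
  | j :: l => (hF.mderiv hU l).pderivAt hU j

end SepHolomorphicOn

section Leibniz

variable {n : ℕ}

theorem pderivAt_congr {F G : (Fin n → ℂ) → ℂ} {z : Fin n → ℂ} (h : F =ᶠ[𝓝 z] G) (j : Fin n) :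
    pderivAt n j F z = pderivAt n j G z := by
  have hupd : Tendsto (fun u => update z j u) (𝓝 (z j)) (𝓝 z) := by
    simpa using ((continuous_const (y := z)).update j continuous_id).tendsto (z j)
  exact EventuallyEq.deriv_eq (hupd.eventually h)

theorem pderivAt_mul {F G : (Fin n → ℂ) → ℂ} {z : Fin n → ℂ} {j : Fin n}
    (hF : DifferentiableAt ℂ (fun u => F (update z j u)) (z j))
    (hG : DifferentiableAt ℂ (fun u => G (update z j u)) (z j)) :
    pderivAt n j (F * G) z = pderivAt n j F z * G z + F z * pderivAt n j G z := by
  change deriv (fun u => F (update z j u) * G (update z j u)) (z j) = _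
  rw [deriv_fun_mul hF hG]
  simp only [update_eq_self]
  rfl

theorem pderivAt_list_sum {ι : Type*} (L : List ι) (F : ι → (Fin n → ℂ) → ℂ)
    {z : Fin n → ℂ} {j : Fin n}
    (hF : ∀ i ∈ L, DifferentiableAt ℂ (fun u => F i (update z j u)) (z j)) :
    pderivAt n j (fun w => (L.map fun i => F i w).sum) z =
      (L.map fun i => pderivAt n j (F i) z).sum := by
  suffices HasDerivAt (fun u => (L.map fun i => F i (update z j u)).sum)
      (L.map fun i => pderivAt n j (F i) z).sum (z j) from this.deriv
  induction L with
  | nil => simpa using hasDerivAt_const (z j) (0 : ℂ)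
  | cons i L ih =>
    simp only [List.map_cons, List.sum_cons]
    exact (hF i List.mem_cons_self).hasDerivAt.add
      (ih fun k hk => hF k (List.mem_cons_of_mem _ hk))

/-- The ways of distributing the derivatives in `l` between two factors, keeping their order. -/
def splits : List (Fin n) → List (List (Fin n) × List (Fin n))
  | [] => [([], [])]
  | j :: l => (splits l).map (fun p => (j :: p.1, p.2)) ++ (splits l).map (fun p => (p.1, j :: p.2))

theorem length_splits (l : List (Fin n)) : (splits l).length = 2 ^ l.length := by
  induction l with
  | nil => rfl
  | cons j l ih => simp [splits, ih, pow_succ, mul_two]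

theorem sublist_and_perm_of_mem_splits {l : List (Fin n)} {p : List (Fin n) × List (Fin n)}
    (hp : p ∈ splits l) : p.1.Sublist l ∧ (p.1 ++ p.2).Perm l := by
  induction l generalizing p with
  | nil =>
    obtain rfl : p = ([], []) := by simpa [splits] using hp
    simp
  | cons j l ih =>
    simp only [splits, List.mem_append, List.mem_map] at hp
    rcases hp with ⟨q, hq, rfl⟩ | ⟨q, hq, rfl⟩
    · exact ⟨(ih hq).1.cons_cons j, (ih hq).2.cons j⟩
    · exact ⟨(ih hq).1.cons j, List.perm_middle.trans ((ih hq).2.cons j)⟩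

theorem mderiv_mul {F G : (Fin n → ℂ) → ℂ} {U : Set (Fin n → ℂ)} (hU : IsOpen U)
    (hF : SepHolomorphicOn n F U) (hG : SepHolomorphicOn n G U) (l : List (Fin n)) :
    ∀ z ∈ U, mderiv n l (F * G) z =
      ((splits l).map fun p => mderiv n p.1 F z * mderiv n p.2 G z).sum := by
  induction l with
  | nil => simp [mderiv, splits]
  | cons j l ih =>
    intro z hz
    have hterm : ∀ p ∈ splits l, SepHolomorphicOn n (mderiv n p.1 F * mderiv n p.2 G) U :=
      fun p _ => (hF.mderiv hU p.1).mul (hG.mderiv hU p.2)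
    calc mderiv n (j :: l) (F * G) z
        = pderivAt n j
            (fun w => ((splits l).map fun p => (mderiv n p.1 F * mderiv n p.2 G) w).sum) z :=
          pderivAt_congr (eventually_of_mem (hU.mem_nhds hz) ih) j
      _ = ((splits l).map fun p => pderivAt n j (mderiv n p.1 F * mderiv n p.2 G) z).sum :=
          pderivAt_list_sum _ _ fun p hp => (hterm p hp).differentiableAt_slice z hz j
      _ = ((splits (j :: l)).map fun p => mderiv n p.1 F z * mderiv n p.2 G z).sum := by
          rw [splits, List.map_append, List.sum_append, List.map_map, List.map_map,
            ← List.sum_map_add]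
          congr 1
          refine List.map_congr_left fun p _ => ?_
          exact pderivAt_mul ((hF.mderiv hU p.1).differentiableAt_slice z hz j)
            ((hG.mderiv hU p.2).differentiableAt_slice z hz j)

theorem mderiv_append (l₁ l₂ : List (Fin n)) (F : (Fin n → ℂ) → ℂ) :
    mderiv n (l₁ ++ l₂) F = mderiv n l₁ (mderiv n l₂ F) := by
  induction l₁ with
  | nil => rfl
  | cons j l ih => exact congrArg (pderivAt n j) ih

end Leibniz

section Estimates

variable {n : ℕ}

theorem prod_mul_norm_mderiv_le {G : (Fin n → ℂ) → ℂ}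
    (hG : SepHolomorphicOn n G (polydisc n)) {s : Finset (Fin n)} {M : ℝ}
    (hM : ∀ w ∈ polydisc n, (∏ k ∈ s, (1 - ‖w k‖ ^ 2)) * ‖G w‖ ≤ M)
    (l : List (Fin n)) (hl : l.Nodup) (hls : ∀ j ∈ l, j ∉ s) {z : Fin n → ℂ}
    (hz : z ∈ polydisc n) :
    (∏ k ∈ s ∪ l.toFinset, (1 - ‖z k‖ ^ 2)) * ‖mderiv n l G z‖ ≤ 4 ^ l.length * M := by
  induction l generalizing z with
  | nil => simpa [mderiv] using hM z hz
  | cons j l ih =>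
    obtain ⟨hjl, hl⟩ := List.nodup_cons.mp hl
    have hjT : j ∉ s ∪ l.toFinset := by
      simp [hls j List.mem_cons_self, hjl]
    set P := ∏ k ∈ s ∪ l.toFinset, (1 - ‖z k‖ ^ 2)
    have hP : 0 < P := Finset.prod_pos fun k _ => one_sub_norm_sq_pos hz k
    set a := ‖z j‖
    have ha : a < 1 := hz j
    set ρ := (1 - a) / 2 with hρ_def
    have hρ : 0 < ρ := by linarith [hρ_def]
    have hmem : ∀ v ∈ ball (z j) ρ, update z j v ∈ polydisc n := by
      intro v hv
      refine update_mem_polydisc hz j ?_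
      calc ‖v‖ ≤ ‖v - z j‖ + a := norm_le_norm_sub_add v (z j)
        _ < ρ + a := by rw [← dist_eq_norm]; exact add_lt_add_of_lt_of_le hv le_rfl
        _ < 1 := by linarith [hρ_def]
    have hslice : ∀ v ∈ ball (z j) ρ, ‖mderiv n l G (update z j v)‖ ≤ 4 ^ l.length * M / P := by
      intro v hv
      have hprod : ∏ k ∈ s ∪ l.toFinset, (1 - ‖update z j v k‖ ^ 2) = P :=
        Finset.prod_congr rfl fun k hk => by rw [update_of_ne (ne_of_mem_of_not_mem hk hjT)]
      rw [le_div_iff₀ hP, mul_comm, ← hprod]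
      exact ih hl (fun i hi => hls i (List.mem_cons_of_mem j hi)) (hmem v hv)
    have hcauchy : ‖mderiv n (j :: l) G z‖ ≤ 4 ^ l.length * M / P / ρ :=
      norm_deriv_le_of_forall_mem_ball_norm_le hρ
        (((hG.mderiv isOpen_polydisc l).differentiableOn_update z j).mono hmem)
        hslice
    have hM0 : 0 ≤ 4 ^ l.length * M / P :=
      (norm_nonneg _).trans (hslice (z j) (mem_ball_self hρ))
    rw [List.toFinset_cons, Finset.union_insert, Finset.prod_insert hjT, List.length_cons]
    calc (1 - a ^ 2) * P * ‖mderiv n (j :: l) G z‖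
        ≤ (1 - a ^ 2) * P * (4 ^ l.length * M / P / ρ) := by
          have := one_sub_norm_sq_pos hz j
          gcongr
      _ = 2 * (1 + a) * (4 ^ l.length * M / P) * P := by
          field_simp
          ring
      _ ≤ 4 * (4 ^ l.length * M / P) * P := by gcongr; linarith
      _ = 4 ^ (l.length + 1) * M := by field_simp; ring

theorem prod_mul_norm_mderiv_le_of_bounded {G : (Fin n → ℂ) → ℂ}
    (hG : SepHolomorphicOn n G (polydisc n)) {M : ℝ} (hM : ∀ w ∈ polydisc n, ‖G w‖ ≤ M)
    {l : List (Fin n)} (hl : l.Nodup) {z : Fin n → ℂ} (hz : z ∈ polydisc n) :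
    (∏ k ∈ l.toFinset, (1 - ‖z k‖ ^ 2)) * ‖mderiv n l G z‖ ≤ 4 ^ l.length * M := by
  simpa using prod_mul_norm_mderiv_le hG (s := ∅) (by simpa using hM) l hl (by simp) hz

theorem prod_mul_norm_mderiv_concat_le {f : (Fin n → ℂ) → ℂ}
    (hf : SepHolomorphicOn n f (polydisc n)) {B : ℝ}
    (hB : ∀ w ∈ polydisc n, ∀ j, (1 - ‖w j‖ ^ 2) * ‖pderivAt n j f w‖ ≤ B)
    {l : List (Fin n)} {j : Fin n} (hl : (l ++ [j]).Nodup) {z : Fin n → ℂ}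
    (hz : z ∈ polydisc n) :
    (∏ k ∈ (l ++ [j]).toFinset, (1 - ‖z k‖ ^ 2)) * ‖mderiv n (l ++ [j]) f z‖ ≤
      4 ^ l.length * B := by
  have hjl : ∀ i ∈ l, i ∉ ({j} : Finset (Fin n)) :=
    fun i hi hij => (List.nodup_append.mp hl).2.2 i hi j (by simp) (Finset.mem_singleton.mp hij)
  have := prod_mul_norm_mderiv_le (hf.pderivAt isOpen_polydisc j) (s := {j})
    (M := B) (by simpa using fun w hw => hB w hw j) l (List.nodup_append.mp hl).1 hjl hz
  rw [show ({j} ∪ l.toFinset : Finset (Fin n)) = (l ++ [j]).toFinset by ext; simp] at this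
  rw [mderiv_append]
  exact this

theorem norm_sub_update_zero_le {f : (Fin n → ℂ) → ℂ} (hf : DifferentiableOn ℂ f (polydisc n))
    {B : ℝ} (hB : ∀ w ∈ polydisc n, ∀ j, (1 - ‖w j‖ ^ 2) * ‖pderivAt n j f w‖ ≤ B)
    {z : Fin n → ℂ} (hz : z ∈ polydisc n) (j : Fin n) :
    ‖f z - f (update z j 0)‖ ≤ B * Real.log (2 / (1 - ‖z j‖ ^ 2)) := by
  have hslice : ball (0 : ℂ) 1 ⊆ {u | update z j u ∈ polydisc n} :=
    fun u hu => update_mem_polydisc hz j (mem_ball_zero_iff.mp hu)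
  have := norm_sub_le_mul_log_of_bloch ((hf.differentiableOn_update z j).mono hslice)
    (fun u hu => by simpa [pderivAt] using hB _ (hslice hu) j) (hz j)
  simpa using this

theorem norm_le_add_mul_sum_log {f : (Fin n → ℂ) → ℂ} (hf : DifferentiableOn ℂ f (polydisc n))
    {B : ℝ} (hB : ∀ w ∈ polydisc n, ∀ j, (1 - ‖w j‖ ^ 2) * ‖pderivAt n j f w‖ ≤ B)
    {z : Fin n → ℂ} (hz : z ∈ polydisc n) :
    ‖f z‖ ≤ ‖f 0‖ + B * ∑ j, Real.log (2 / (1 - ‖z j‖ ^ 2)) := by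
  classical
  have key : ∀ S : Finset (Fin n), ‖f (S.piecewise z 0)‖ ≤
      ‖f 0‖ + B * ∑ j ∈ S, Real.log (2 / (1 - ‖z j‖ ^ 2)) := by
    intro S
    induction S using Finset.induction_on with
    | empty => simp
    | insert j S hj ih =>
      have hmem : S.piecewise z 0 ∈ polydisc n := fun k => by
        by_cases hk : k ∈ S <;> simp [hk, hz k]
      have hstep := norm_sub_update_zero_le hf hB (update_mem_polydisc hmem j (hz j)) j
      have hzero : update (S.piecewise z 0) j 0 = S.piecewise z 0 := by
        rw [update_eq_self_iff, Finset.piecewise_eq_of_notMem _ _ _ hj, Pi.zero_apply]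
      rw [update_idem, hzero, update_self] at hstep
      rw [Finset.piecewise_insert, Finset.sum_insert hj]
      linarith [norm_le_insert' (f (update (S.piecewise z 0) j (z j))) (f (S.piecewise z 0))]
  simpa using key Finset.univ

theorem prod_mul_norm_mderiv_finRange_mul_norm_le {φ f : (Fin n → ℂ) → ℂ}
    (hφ : SepHolomorphicOn n φ (polydisc n)) (hf : DifferentiableOn ℂ f (polydisc n))
    {Mφ ML B : ℝ} (hMφ : ∀ w ∈ polydisc n, ‖φ w‖ ≤ Mφ)
    (hML : ∀ w ∈ polydisc n, (∏ j, (1 - ‖w j‖ ^ 2)) * (∑ j, Real.log (2 / (1 - ‖w j‖ ^ 2))) *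
      ‖mderiv n (List.finRange n) φ w‖ ≤ ML)
    (hB : ∀ w ∈ polydisc n, ∀ j, (1 - ‖w j‖ ^ 2) * ‖pderivAt n j f w‖ ≤ B) (hf0 : ‖f 0‖ ≤ B)
    {z : Fin n → ℂ} (hz : z ∈ polydisc n) :
    (∏ j, (1 - ‖z j‖ ^ 2)) * (‖mderiv n (List.finRange n) φ z‖ * ‖f z‖) ≤
      (4 ^ n * Mφ + ML) * B := by
  set P := ∏ j, (1 - ‖z j‖ ^ 2)
  set L := ∑ j, Real.log (2 / (1 - ‖z j‖ ^ 2))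
  have hcauchy : P * ‖mderiv n (List.finRange n) φ z‖ ≤ 4 ^ n * Mφ := by
    simpa using prod_mul_norm_mderiv_le_of_bounded hφ hMφ (List.nodup_finRange n) hz
  have hP : 0 ≤ P * ‖mderiv n (List.finRange n) φ z‖ :=
    mul_nonneg (Finset.prod_nonneg fun k _ => (one_sub_norm_sq_pos hz k).le) (norm_nonneg _)
  calc P * (‖mderiv n (List.finRange n) φ z‖ * ‖f z‖)
      ≤ P * ‖mderiv n (List.finRange n) φ z‖ * (‖f 0‖ + B * L) := by
        rw [← mul_assoc]
        gcongr
        exact norm_le_add_mul_sum_log hf hB hz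
    _ = P * ‖mderiv n (List.finRange n) φ z‖ * ‖f 0‖ +
        B * (P * L * ‖mderiv n (List.finRange n) φ z‖) := by ring
    _ ≤ 4 ^ n * Mφ * B + B * ML := by
        have hB0 : 0 ≤ B := (norm_nonneg _).trans hf0
        have hMφ0 : 0 ≤ 4 ^ n * Mφ := mul_nonneg (by positivity) ((norm_nonneg _).trans (hMφ z hz))
        gcongr
        exact hML z hz
    _ = (4 ^ n * Mφ + ML) * B := by ring

theorem prod_mul_norm_mderiv_mul_norm_mderiv_concat_le {φ f : (Fin n → ℂ) → ℂ}
    (hφ : SepHolomorphicOn n φ (polydisc n)) (hf : SepHolomorphicOn n f (polydisc n))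
    {Mφ B : ℝ} (hMφ : ∀ w ∈ polydisc n, ‖φ w‖ ≤ Mφ)
    (hB : ∀ w ∈ polydisc n, ∀ j, (1 - ‖w j‖ ^ 2) * ‖pderivAt n j f w‖ ≤ B)
    {l₁ l₂ : List (Fin n)} {j : Fin n} (hperm : (l₁ ++ (l₂ ++ [j])).Perm (List.finRange n))
    {z : Fin n → ℂ} (hz : z ∈ polydisc n) :
    (∏ k, (1 - ‖z k‖ ^ 2)) * (‖mderiv n l₁ φ z‖ * ‖mderiv n (l₂ ++ [j]) f z‖) ≤
      4 ^ n * Mφ * B := by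
  have hMφ0 : 0 ≤ Mφ := (norm_nonneg _).trans (hMφ z hz)
  have hB0 : 0 ≤ B :=
    (mul_nonneg (one_sub_norm_sq_pos hz j).le (norm_nonneg _)).trans (hB z hz j)
  have hnodup := List.nodup_append'.mp (hperm.nodup_iff.mpr (List.nodup_finRange n))
  have hunion : l₁.toFinset ∪ (l₂ ++ [j]).toFinset = Finset.univ := by
    rw [← List.toFinset_append, List.toFinset_eq_of_perm _ _ hperm, List.toFinset_finRange]
  have hlen : l₁.length + l₂.length + 1 = n := by
    simpa [add_assoc] using hperm.length_eq
  have hφ' := prod_mul_norm_mderiv_le_of_bounded hφ hMφ hnodup.1 hz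
  have hf' := prod_mul_norm_mderiv_concat_le hf hB hnodup.2.1 hz
  rw [← hunion, Finset.prod_union (List.disjoint_toFinset_iff_disjoint.mpr hnodup.2.2)]
  calc _ = ((∏ k ∈ l₁.toFinset, (1 - ‖z k‖ ^ 2)) * ‖mderiv n l₁ φ z‖) *
        ((∏ k ∈ (l₂ ++ [j]).toFinset, (1 - ‖z k‖ ^ 2)) * ‖mderiv n (l₂ ++ [j]) f z‖) := by
        ring
    _ ≤ (4 ^ l₁.length * Mφ) * (4 ^ l₂.length * B) := by
        gcongr
        exact mul_nonneg (Finset.prod_nonneg fun k _ => (one_sub_norm_sq_pos hz k).le)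
          (norm_nonneg _)
    _ = 4 ^ (l₁.length + l₂.length) * Mφ * B := by ring
    _ ≤ 4 ^ n * Mφ * B := by gcongr <;> [norm_num; omega]

theorem prod_mul_norm_mderiv_mul_norm_mderiv_le {φ f : (Fin n → ℂ) → ℂ}
    (hφ : DifferentiableOn ℂ φ (polydisc n)) (hf : DifferentiableOn ℂ f (polydisc n))
    {Mφ ML B : ℝ} (hMφ : ∀ w ∈ polydisc n, ‖φ w‖ ≤ Mφ)
    (hML : ∀ w ∈ polydisc n, (∏ j, (1 - ‖w j‖ ^ 2)) * (∑ j, Real.log (2 / (1 - ‖w j‖ ^ 2))) *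
      ‖mderiv n (List.finRange n) φ w‖ ≤ ML) (hML0 : 0 ≤ ML)
    (hB : ∀ w ∈ polydisc n, ∀ j, (1 - ‖w j‖ ^ 2) * ‖pderivAt n j f w‖ ≤ B) (hf0 : ‖f 0‖ ≤ B)
    {p : List (Fin n) × List (Fin n)} (hp : p ∈ splits (List.finRange n))
    {z : Fin n → ℂ} (hz : z ∈ polydisc n) :
    (∏ j, (1 - ‖z j‖ ^ 2)) * (‖mderiv n p.1 φ z‖ * ‖mderiv n p.2 f z‖) ≤
      (4 ^ n * Mφ + ML) * B := by
  have hφS := hφ.sepHolomorphicOn isOpen_polydisc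
  obtain ⟨hsub, hperm⟩ := sublist_and_perm_of_mem_splits hp
  rcases List.eq_nil_or_concat' p.2 with h2 | ⟨l₂, j, h2⟩
  · have h1 : p.1 = List.finRange n := hsub.eq_of_length (by simpa [h2] using hperm.length_eq)
    rw [h1, h2]
    exact prod_mul_norm_mderiv_finRange_mul_norm_le hφS hf hMφ hML hB hf0 hz
  · rw [h2] at hperm ⊢
    have hB0 : 0 ≤ B := (norm_nonneg _).trans hf0
    calc _ ≤ 4 ^ n * Mφ * B := prod_mul_norm_mderiv_mul_norm_mderiv_concat_le hφS
          (hf.sepHolomorphicOn isOpen_polydisc) hMφ hB hperm hz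
      _ ≤ (4 ^ n * Mφ + ML) * B := by gcongr; exact le_add_of_nonneg_right hML0

theorem mul_norm_list_sum_map_le {ι E : Type*} [SeminormedAddCommGroup E] (L : List ι)
    (g : ι → E) {c K : ℝ} (hc : 0 ≤ c) (h : ∀ i ∈ L, c * ‖g i‖ ≤ K) :
    c * ‖(L.map g).sum‖ ≤ L.length * K := by
  induction L with
  | nil => simp
  | cons i L ih =>
    rw [List.map_cons, List.sum_cons, List.length_cons, Nat.cast_succ]
    have := ih fun k hk => h k (List.mem_cons_of_mem i hk)
    nlinarith [norm_add_le (g i) (L.map g).sum, h i List.mem_cons_self]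

theorem prod_mul_norm_mderiv_mul_le {φ f : (Fin n → ℂ) → ℂ}
    (hφ : DifferentiableOn ℂ φ (polydisc n)) (hf : DifferentiableOn ℂ f (polydisc n))
    {Mφ ML B : ℝ} (hMφ : ∀ w ∈ polydisc n, ‖φ w‖ ≤ Mφ)
    (hML : ∀ w ∈ polydisc n, (∏ j, (1 - ‖w j‖ ^ 2)) * (∑ j, Real.log (2 / (1 - ‖w j‖ ^ 2))) *
      ‖mderiv n (List.finRange n) φ w‖ ≤ ML) (hML0 : 0 ≤ ML)
    (hB : ∀ w ∈ polydisc n, ∀ j, (1 - ‖w j‖ ^ 2) * ‖pderivAt n j f w‖ ≤ B) (hf0 : ‖f 0‖ ≤ B)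
    {z : Fin n → ℂ} (hz : z ∈ polydisc n) :
    (∏ j, (1 - ‖z j‖ ^ 2)) * ‖mderiv n (List.finRange n) (φ * f) z‖ ≤
      2 ^ n * ((4 ^ n * Mφ + ML) * B) := by
  have hU : IsOpen (polydisc n) := isOpen_polydisc
  rw [mderiv_mul hU (hφ.sepHolomorphicOn hU) (hf.sepHolomorphicOn hU) _ z hz]
  convert mul_norm_list_sum_map_le (splits (List.finRange n))
    (fun p => mderiv n p.1 φ z * mderiv n p.2 f z) (K := (4 ^ n * Mφ + ML) * B)
    (Finset.prod_nonneg fun k _ => (one_sub_norm_sq_pos hz k).le) fun p hp => by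
      rw [norm_mul]
      exact prod_mul_norm_mderiv_mul_norm_mderiv_le hφ hf hMφ hML hML0 hB hf0 hp hz
  simp [length_splits]

theorem norm_apply_zero_le_sumBlochExpr {f : (Fin n → ℂ) → ℂ} {z : Fin n → ℂ}
    (hz : z ∈ polydisc n) : ‖f 0‖ ≤ sumBlochExpr n f z :=
  le_add_of_nonneg_right <| Finset.sum_nonneg fun j _ =>
    mul_nonneg (one_sub_norm_sq_pos hz j).le (norm_nonneg _)

theorem mul_norm_pderivAt_le_sumBlochExpr {f : (Fin n → ℂ) → ℂ} {z : Fin n → ℂ}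
    (hz : z ∈ polydisc n) (j : Fin n) :
    (1 - ‖z j‖ ^ 2) * ‖pderivAt n j f z‖ ≤ sumBlochExpr n f z :=
  (Finset.single_le_sum (f := fun k => (1 - ‖z k‖ ^ 2) * ‖pderivAt n k f z‖)
    (fun k _ => mul_nonneg (one_sub_norm_sq_pos hz k).le (norm_nonneg _))
    (Finset.mem_univ j)).trans (le_add_of_nonneg_left (norm_nonneg (f 0)))

end Estimates

/-- If `φ ∈ H^∞(Dⁿ) ∩ 𝔹_L(Dⁿ)` then `φ` multiplies the sum Bloch space `𝔹(Dⁿ)` into the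
product Bloch space `B(Dⁿ)`, with `‖φf‖_B ≤ C(‖φ‖_∞ + ‖φ‖_{𝔹_L})‖f‖_𝔹`. -/
theorem sum_to_prod_bloch_multiplier_sufficiency (n : ℕ) :
    ∃ C : ℝ, 0 < C ∧
      ∀ (φ f : (Fin n → ℂ) → ℂ) (Mφ ML B : ℝ),
        DifferentiableOn ℂ φ (polydisc n) →
        DifferentiableOn ℂ f (polydisc n) →
        (∀ z ∈ polydisc n, ‖φ z‖ ≤ Mφ) →
        (∀ z ∈ polydisc n,
          ‖φ 0‖ +
            (∏ j, (1 - ‖z j‖ ^ 2)) *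
              (∑ j, Real.log (2 / (1 - ‖z j‖ ^ 2))) *
              ‖mderiv n (List.finRange n) φ z‖ ≤ ML) →
        (∀ z ∈ polydisc n, sumBlochExpr n f z ≤ B) →
        ∀ z ∈ polydisc n, prodBlochExpr n (φ * f) z ≤ C * (Mφ + ML) * B := by
  refine ⟨1 + 8 ^ n, by positivity, fun φ f Mφ ML B hφ hf hMφ hML hB z hz => ?_⟩
  have h0 : (0 : Fin n → ℂ) ∈ polydisc n := fun j => by simp
  have hf0 : ‖f 0‖ ≤ B := (norm_apply_zero_le_sumBlochExpr h0).trans (hB 0 h0)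
  have hMφ0 : 0 ≤ Mφ := (norm_nonneg _).trans (hMφ 0 h0)
  have hB0 : 0 ≤ B := (norm_nonneg _).trans hf0
  have hML' := fun w hw => (le_add_of_nonneg_left (norm_nonneg (φ 0))).trans (hML w hw)
  have hML0 : 0 ≤ ML := by
    refine le_trans ?_ (hML' 0 h0)
    norm_num
    positivity
  have hprod := prod_mul_norm_mderiv_mul_le hφ hf hMφ hML' hML0
    (fun w hw j => (mul_norm_pderivAt_le_sumBlochExpr hw j).trans (hB w hw)) hf0 hz
  have hzero : ‖(φ * f) 0‖ ≤ Mφ * B := by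
    rw [Pi.mul_apply, norm_mul]
    exact mul_le_mul (hMφ 0 h0) hf0 (norm_nonneg _) hMφ0
  have hexpand : (2 : ℝ) ^ n * ((4 ^ n * Mφ + ML) * B) = 8 ^ n * Mφ * B + 2 ^ n * (ML * B) := by
    rw [show (8 : ℝ) ^ n = 2 ^ n * 4 ^ n by rw [← mul_pow]; norm_num]
    ring
  have h28 : (2 : ℝ) ^ n ≤ 8 ^ n := pow_le_pow_left₀ (by norm_num) (by norm_num) n
  calc prodBlochExpr n (φ * f) z ≤ Mφ * B + 2 ^ n * ((4 ^ n * Mφ + ML) * B) :=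
        add_le_add hzero hprod
    _ ≤ (1 + 8 ^ n) * (Mφ + ML) * B := by
        rw [hexpand]
        nlinarith [mul_nonneg hML0 hB0, mul_le_mul_of_nonneg_right h28 (mul_nonneg hML0 hB0)]
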